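/- arXiv:1012.6008 — 3 statements merged into one kernel-verified Lean document; each statement's English description precedes it below -/
import Mathlib

section
/- Let f and g be exponential formal power series over a commutative Q-algebra with g(0)=0, where f(t) = 1 + Σ_{n≥1} a_n t^n/n! and g(t) = Σ_{n≥1} g_n t^n/n!. Then the n-th coefficient h_n (times n!) of the composition f∘g satisfies Faà di Bruno's formula: h_n = Σ_{λ ⊢ n} (n!/(m(λ)! λ!)) a_{ℓ(λ)} g_λ, where the sum is over integer partitions λ = (1^{r_1} 2^{r_2} ...) of n, ℓ(λ) = r_1+r_2+... is the number of parts, m(λ)! = r_1! r_2! ..., λ! = (1!)^{r_1}(2!)^{r_2}..., and g_λ = g_1^{r_1} g_2^{r_2} .... -/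
/-!
By the multinomial theorem, the `n`-th coefficient of `G ^ k` is a sum over multisets of `k`
exponents with sum `n`, each counted with its number of orderings `k! / m(λ)!`. As `g 0 = 0`,
only multisets without zeros survive, and these are the partitions of `n` into `k` parts;
the factor `k!` then cancels against the `1 / k!` of the outer series.
-/

open Nat

namespace Multiset

theorem countPerms_mul_prod_factorial_count {α : Type*} [DecidableEq α] (m : Multiset α) :
    m.countPerms * ∏ a ∈ m.toFinset, (m.count a)! = m.card ! := by
  rw [countPerms, Finsupp.multinomial_eq, mul_comm]
  simpa [toFinset_sum_count_eq] using Nat.multinomial_spec m.toFinset m.toFinsupp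

theorem prod_map_smul {ι M N : Type*} [CommMonoid M] [CommMonoid N] [MulAction M N]
    [IsScalarTower M N N] [SMulCommClass M N N] (s : Multiset ι) (b : ι → M) (f : ι → N) :
    (s.map fun i => b i • f i).prod = (s.map b).prod • (s.map f).prod := by
  induction s using Multiset.induction_on with
  | empty => simp
  | cons a s ih => simp only [map_cons, prod_cons, ih, smul_mul_smul_comm]

theorem countPerms_mul_prod_map_inv_factorial_smul {R : Type*} [CommRing R] [Algebra ℚ R]
    (m : Multiset ℕ) (g : ℕ → R) :
    (m.countPerms : R) * (m.map fun j => (j ! : ℚ)⁻¹ • g j).prod =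
      ((m.card ! : ℚ) /
          ((∏ j ∈ m.toFinset, ((m.count j)! : ℚ)) * (m.map fun j => (j ! : ℚ)).prod)) •
        (m.map g).prod := by
  have hq : (m.countPerms : ℚ) * (m.map fun j => (j ! : ℚ)⁻¹).prod =
      (m.card ! : ℚ) /
        ((∏ j ∈ m.toFinset, ((m.count j)! : ℚ)) * (m.map fun j => (j ! : ℚ)).prod) := by
    rw [prod_map_inv, ← m.countPerms_mul_prod_factorial_count]
    push_cast
    field_simp
  rw [prod_map_smul, ← hq, mul_smul, ← nsmul_eq_mul, Nat.cast_smul_eq_nsmul]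

end Multiset

theorem Nat.Partition.card_parts_le {n : ℕ} (p : n.Partition) : p.parts.card ≤ n := by
  simpa [← p.parts_sum] using
    Multiset.card_nsmul_le_sum (s := p.parts) (a := 1) fun _ hi => p.parts_pos hi

namespace PowerSeries

variable {R : Type*} [CommSemiring R]

theorem multiset_prod_map_monomial (m : Multiset ℕ) (c : ℕ → R) :
    (m.map fun j => monomial j (c j)).prod = monomial m.sum (m.map c).prod := by
  induction m using Multiset.induction_on with
  | empty => simp
  | cons a s ih => simp [ih, monomial_mul_monomial]

theorem coeff_pow_eq_coeff_trunc_pow (f : R⟦X⟧) (n k : ℕ) :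
    coeff n (f ^ k) = coeff n ((trunc (n + 1) f : R⟦X⟧) ^ k) := by
  have h := congrArg (Polynomial.coeff · n) (trunc_trunc_pow f (n + 1) k)
  simp only [coeff_trunc, lt_add_one, if_true] at h
  exact h.symm

theorem coeff_pow_eq_sum_sym (f : R⟦X⟧) (n k : ℕ) :
    coeff n (f ^ k) = ∑ m ∈ (Finset.range (n + 1)).sym k,
      if (m : Multiset ℕ).sum = n then
        (m : Multiset ℕ).countPerms * ((m : Multiset ℕ).map (coeff · f)).prod
      else 0 := by
  have htrunc : (trunc (n + 1) f : R⟦X⟧) =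
      ∑ i ∈ Finset.range (n + 1), monomial i (coeff i f) := by
    rw [trunc_apply, ← Polynomial.coeToPowerSeries.ringHom_apply, map_sum, Finset.range_eq_Ico]
    simp only [Polynomial.coeToPowerSeries.ringHom_apply, Polynomial.coe_monomial]
  rw [coeff_pow_eq_coeff_trunc_pow, htrunc, Finset.sum_pow, map_sum]
  refine Finset.sum_congr rfl fun m _ => ?_
  rw [multiset_prod_map_monomial, ← nsmul_eq_mul, map_nsmul, coeff_monomial]
  by_cases h : (m : Multiset ℕ).sum = n
  · simp [h]
  · simp [h, Ne.symm h]

theorem coeff_pow_eq_sum_partition (f : R⟦X⟧) (hf : constantCoeff f = 0) (n k : ℕ) :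
    coeff n (f ^ k) = ∑ p : n.Partition with p.parts.card = k,
      p.parts.countPerms * (p.parts.map (coeff · f)).prod := by
  rw [coeff_pow_eq_sum_sym]
  symm
  refine Finset.sum_bij_ne_zero
    (fun p hp _ => (⟨p.parts, (Finset.mem_filter.1 hp).2⟩ : Sym ℕ k)) ?_ ?_ ?_ ?_
  · intro p _ _
    refine Finset.mem_sym_iff.2 fun i hi => Finset.mem_range.2 (Nat.lt_succ_of_le ?_)
    exact p.parts_sum ▸ Multiset.le_sum_of_mem hi
  · intro p _ _ q _ _ h
    exact Nat.Partition.ext (congrArg Subtype.val h)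
  · intro m _ hm
    have hsum : (m : Multiset ℕ).sum = n := by
      by_contra h
      simp [h] at hm
    have hpos : ∀ i ∈ (m : Multiset ℕ), 0 < i := by
      intro i hi
      refine Nat.pos_of_ne_zero fun h0 => hm ?_
      have hzero : (0 : R) ∈ (m : Multiset ℕ).map (coeff · f) :=
        Multiset.mem_map.2 ⟨0, h0 ▸ hi, by simpa using hf⟩
      rw [if_pos hsum, Multiset.prod_eq_zero hzero, mul_zero]
    exact ⟨⟨m, hpos _, hsum⟩, Finset.mem_filter.2 ⟨Finset.mem_univ _, m.2⟩,
      by simpa [hsum] using hm, rfl⟩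
  · intro p _ _
    exact (if_pos p.parts_sum).symm

end PowerSeries

open PowerSeries in
theorem stmt1_general {R : Type*} [CommRing R] [Algebra ℚ R]
    (a g : ℕ → R) (hg : g 0 = 0)
    (G : PowerSeries R) (hG : G = PowerSeries.mk fun n => ((n ! : ℚ)⁻¹) • g n)
    (H : PowerSeries R)
    (hH : H = PowerSeries.mk fun n =>
      ∑ k ∈ Finset.range (n + 1), ((k ! : ℚ)⁻¹) • (a k * PowerSeries.coeff n (G ^ k)))
    (n : ℕ) :
    (n ! : ℚ) • PowerSeries.coeff n H =
      ∑ p : Nat.Partition n,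
        ((n ! : ℚ) /
            ((∏ j ∈ p.parts.toFinset, ((p.parts.count j)! : ℚ)) *
              ((p.parts.map fun j => (j ! : ℚ)).prod))) •
          (a p.parts.card * (p.parts.map g).prod) := by
  have hG0 : constantCoeff G = 0 := by simp [hG, hg]
  have hcard (p : n.Partition) : p.parts.card ∈ Finset.range (n + 1) :=
    Finset.mem_range_succ_iff.2 p.card_parts_le
  rw [hH, coeff_mk, Finset.smul_sum, ← Finset.sum_fiberwise_of_maps_to fun p _ => hcard p]
  refine Finset.sum_congr rfl fun k _ => ?_
  rw [coeff_pow_eq_sum_partition G hG0, Finset.mul_sum, Finset.smul_sum, Finset.smul_sum]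
  refine Finset.sum_congr rfl fun p hp => ?_
  obtain rfl := (Finset.mem_filter.1 hp).2
  simp only [hG, coeff_mk]
  rw [Multiset.countPerms_mul_prod_map_inv_factorial_smul, mul_smul_comm, smul_smul, smul_smul]
  congr 1
  field_simp

/-- **Univariate Faà di Bruno's formula** for exponential generating functions.
`G` is the EGF of `g` (with `g 0 = 0`), `H = f ∘ G` is the composition with the EGF
`f` of `a` (with `a 0 = 1`), computed coefficientwise as `∑ k, (a k / k!) ⬝ coeff n (G ^ k)`
(the sum may be truncated at `k = n` since `G` has zero constant term). Then the `n`-th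
coefficient `h n` (times `n!`) of `H` is given by the sum over integer partitions `λ ⊢ n` of
`(n! / (m(λ)! λ!)) · a (ℓ λ) · g_λ`. -/
theorem stmt1 {R : Type*} [CommRing R] [Algebra ℚ R]
    (a g : ℕ → R) (ha : a 0 = 1) (hg : g 0 = 0)
    (G : PowerSeries R) (hG : G = PowerSeries.mk fun n => ((n ! : ℚ)⁻¹) • g n)
    (H : PowerSeries R)
    (hH : H = PowerSeries.mk fun n =>
      ∑ k ∈ Finset.range (n + 1), ((k ! : ℚ)⁻¹) • (a k * PowerSeries.coeff n (G ^ k)))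
    (n : ℕ) :
    (n ! : ℚ) • PowerSeries.coeff n H =
      ∑ p : Nat.Partition n,
        ((n ! : ℚ) /
            ((∏ j ∈ p.parts.toFinset, ((p.parts.count j)! : ℚ)) *
              ((p.parts.map fun j => (j ! : ℚ)).prod))) •
          (a p.parts.card * (p.parts.map g).prod) :=
  stmt1_general a g hg G hG H hH n
end

section
/- Let f(s₁,...,sₙ) = 1 + Σ a_j s^j/j! be an n-variate exponential power series and let G₁,...,Gₙ be m-variate exponential power series each with constant term 1. The generalized Bell polynomials B_i(x₁,...,xₙ) defined by exp( Σ_{k=1}^{n} x_k (G_k(t) − 1) ) = Σ_i B_i(x₁,...,xₙ) t^i/i! satisfy: substituting for x₁^{j₁}···xₙ^{jₙ} the coefficient a_j of f yields the coefficient of t^i/i! in the composition f(G₁(t)−1, ..., Gₙ(t)−1). -/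
/-!
By the multinomial theorem, the coefficient of `t^i` in `C^l` is the polynomial
`∑_{|d| = l} multinomial(d) · coeff_i (∏ (G_k - 1)^{d_k}) · x^d`. Umbral evaluation is linear,
so it replaces `x^d` by `a d`, and `multinomial(d) / l! = 1 / d!`. Summing over `l ≤ |i|`
reaches every `d` that contributes to `coeff_i H`, because `∏ (G_k - 1)^{d_k}` has order at
least `|d|`.
-/

open Nat MvPowerSeries Finset

namespace MvPolynomial

variable {σ R : Type*} [CommSemiring R]

/-- The substitution `x^j ↦ a j`, extended `R`-linearly. -/
noncomputable def umbralEval (a : (σ →₀ ℕ) → R) : MvPolynomial σ R →ₗ[R] R :=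
  Finsupp.linearCombination R a ∘ₗ (AddMonoidAlgebra.coeffLinearEquiv R).toLinearMap

variable (a : (σ →₀ ℕ) → R)

theorem umbralEval_apply (p : MvPolynomial σ R) :
    umbralEval a p = ∑ j ∈ p.support, p.coeff j * a j :=
  Finsupp.linearCombination_apply R _

theorem umbralEval_monomial (j : σ →₀ ℕ) (c : R) : umbralEval a (monomial j c) = c * a j :=
  Finsupp.linearCombination_single R c j

end MvPolynomial

theorem finsum_eq_sum_range_piAntidiag {ι M : Type*} [Fintype ι] [DecidableEq ι]
    [AddCommMonoid M] (f : (ι →₀ ℕ) → M) (N : ℕ)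
    (hf : ∀ d, N < ∑ k, d k → f d = 0) :
    ∑ᶠ d, f d = ∑ l ∈ range (N + 1), ∑ d ∈ piAntidiag univ l,
      f (Finsupp.equivFunOnFinite.symm d) := by
  have hdisj : (range (N + 1) : Set ℕ).PairwiseDisjoint (piAntidiag (univ : Finset ι)) :=
    fun l₁ _ l₂ _ hne => disjoint_left.2 fun d h₁ h₂ =>
      hne ((mem_piAntidiag.1 h₁).1.symm.trans (mem_piAntidiag.1 h₂).1)
  rw [← sum_biUnion hdisj, ← finsum_comp_equiv Finsupp.equivFunOnFinite.symm]
  refine finsum_eq_sum_of_support_subset _ fun d hd => ?_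
  simp only [coe_biUnion, coe_range, Set.mem_iUnion, mem_coe, mem_piAntidiag, Set.mem_Iio]
  refine ⟨∑ k, d k, ?_, rfl, fun k _ => mem_univ k⟩
  by_contra hN
  exact hd (hf _ (by simpa using hN))

theorem inv_factorial_sum_mul_multinomial {ι : Type*} (s : Finset ι) (d : ι → ℕ) :
    ((∑ k ∈ s, d k)! : ℚ)⁻¹ * multinomial s d = (∏ k ∈ s, ((d k)! : ℚ))⁻¹ := by
  rw [← multinomial_spec, Nat.cast_mul, Nat.cast_prod, mul_inv, mul_assoc,
    inv_mul_cancel₀ (by exact_mod_cast (multinomial_pos s d).ne'), mul_one]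

namespace MvPowerSeries

variable {ι σ R : Type*} [CommSemiring R]

theorem coeff_prod_pow_eq_zero_of_degree_lt (F : ι → MvPowerSeries σ R)
    (hF : ∀ k, constantCoeff (F k) = 0) (s : Finset ι) (e : ι → ℕ) {d : σ →₀ ℕ}
    (hd : d.degree < ∑ k ∈ s, e k) : coeff d (∏ k ∈ s, F k ^ e k) = 0 := by
  refine coeff_of_lt_order (lt_of_lt_of_le ?_ (le_order_prod _ s))
  calc (d.degree : ℕ∞) < ∑ k ∈ s, (e k : ℕ∞) := by exact_mod_cast hd
    _ ≤ _ := sum_le_sum fun k _ => le_order_pow_of_constantCoeff_eq_zero _ (hF k)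

theorem coeff_pow_sum_C_X_mul_map_C [Fintype ι] [DecidableEq ι] (F : ι → MvPowerSeries σ R)
    (i : σ →₀ ℕ) (l : ℕ) :
    coeff i ((∑ k, C (MvPolynomial.X k) *
        map (MvPolynomial.C : R →+* MvPolynomial ι R) (F k)) ^ l) =
      ∑ d ∈ piAntidiag univ l, MvPolynomial.monomial (Finsupp.equivFunOnFinite.symm d)
        (multinomial univ d * coeff i (∏ k, F k ^ d k)) := by
  rw [sum_pow_eq_sum_piAntidiag, map_sum]
  refine sum_congr rfl fun d _ => ?_
  simp only [mul_pow, prod_mul_distrib, ← map_pow, ← map_prod, ← map_natCast (C (σ := σ)),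
    coeff_C_mul, coeff_map]
  rw [MvPolynomial.monomial_eq, Finsupp.prod_fintype _ _ fun _ => pow_zero _]
  simp only [Finsupp.coe_equivFunOnFinite_symm, map_mul, map_natCast]
  ring

end MvPowerSeries

theorem umbralEval_coeff_pow_sum_C_X_mul_map_C {ι σ R : Type*} [Fintype ι] [DecidableEq ι]
    [CommRing R] [Algebra ℚ R] (a : (ι →₀ ℕ) → R) (F : ι → MvPowerSeries σ R)
    (i : σ →₀ ℕ) (l : ℕ) :
    (l ! : ℚ)⁻¹ • MvPolynomial.umbralEval a (coeff i ((∑ k, C (MvPolynomial.X k) *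
        map (MvPolynomial.C : R →+* MvPolynomial ι R) (F k)) ^ l)) =
      ∑ d ∈ piAntidiag univ l, (∏ k, ((d k)! : ℚ))⁻¹ •
        (a (Finsupp.equivFunOnFinite.symm d) * coeff i (∏ k, F k ^ d k)) := by
  rw [coeff_pow_sum_C_X_mul_map_C, map_sum, smul_sum]
  refine sum_congr rfl fun d hd => ?_
  rw [MvPolynomial.umbralEval_monomial, ← (mem_piAntidiag.1 hd).1,
    ← inv_factorial_sum_mul_multinomial, mul_smul, Nat.cast_smul_eq_nsmul, nsmul_eq_mul,
    mul_assoc, mul_comm (a _)]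

theorem stmt13_general {R : Type*} [CommRing R] [Algebra ℚ R] {n m : ℕ}
    (a : (Fin n →₀ ℕ) → R)
    (G : Fin n → MvPowerSeries (Fin m) R)
    (hG : ∀ k, MvPowerSeries.constantCoeff (G k) = 1)
    (C : MvPowerSeries (Fin m) (MvPolynomial (Fin n) R))
    (hC : C = ∑ k, MvPowerSeries.C (MvPolynomial.X k) *
      MvPowerSeries.map (MvPolynomial.C : R →+* MvPolynomial (Fin n) R) (G k - 1))
    (E : MvPowerSeries (Fin m) (MvPolynomial (Fin n) R))
    (hE : ∀ i : Fin m →₀ ℕ,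
      MvPowerSeries.coeff i E =
        ∑ l ∈ Finset.range ((∑ j, i j) + 1),
          ((l ! : ℚ)⁻¹) • MvPowerSeries.coeff i (C ^ l))
    (B : (Fin m →₀ ℕ) → MvPolynomial (Fin n) R)
    (hB : ∀ i : Fin m →₀ ℕ,
      B i = (∏ j, ((i j)! : ℚ)) • MvPowerSeries.coeff i E)
    (H : MvPowerSeries (Fin m) R)
    (hH : ∀ i : Fin m →₀ ℕ,
      MvPowerSeries.coeff i H =
        ∑ᶠ j : Fin n →₀ ℕ,
          ((∏ k, ((j k)! : ℚ))⁻¹) •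
            (a j * MvPowerSeries.coeff i (∏ k, (G k - 1) ^ j k)))
    (i : Fin m →₀ ℕ) :
    ∑ j ∈ (B i).support, (B i).coeff j * a j =
      (∏ j, ((i j)! : ℚ)) • MvPowerSeries.coeff i H := by
  have hG₁ : ∀ k, constantCoeff (G k - 1) = 0 := fun k => by simp [hG k]
  rw [← MvPolynomial.umbralEval_apply, hB, map_rat_smul, hE, hH, map_sum,
    finsum_eq_sum_range_piAntidiag _ (∑ j, i j)]
  · refine congrArg _ (sum_congr rfl fun l _ => ?_)
    rw [map_rat_smul, hC, umbralEval_coeff_pow_sum_C_X_mul_map_C]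
    simp only [Finsupp.coe_equivFunOnFinite_symm]
  · intro d hd
    rw [coeff_prod_pow_eq_zero_of_degree_lt _ hG₁ _ _ (by rwa [Finsupp.degree_eq_sum]),
      mul_zero, smul_zero]

/-- **Generalized Bell polynomials and the general multivariate Faà di Bruno formula.**
Let `f(s₁, ..., sₙ) = 1 + ∑ a_j s^j / j!` be an `n`-variate exponential power series and
`G₁, ..., Gₙ` be `m`-variate exponential power series with constant term `1`. The
generalized Bell polynomial `B i ∈ R[x₁, ..., xₙ]` is `i!` times the coefficient of `t^i`
in `E = exp(∑_k x_k (G_k(t) - 1))` (the exponential computed coefficientwise as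
`∑_l coeff i (C^l) / l!`, truncated at `l = |i|`, with
`C = ∑_k x_k (G_k - 1)` over the polynomial ring). The umbral evaluation substituting
`a j` for each monomial `x^j` in `B i` yields `i!` times the coefficient of `t^i` in the
formal composition `H = f(G₁ - 1, ..., Gₙ - 1)`, whose coefficients are
`coeff i H = ∑_j (a j / j!) ⬝ coeff i (∏_k (G_k - 1)^{j_k})`. -/
theorem stmt13 {R : Type*} [CommRing R] [Algebra ℚ R] {n m : ℕ}
    (a : (Fin n →₀ ℕ) → R) (ha : a 0 = 1)
    (G : Fin n → MvPowerSeries (Fin m) R)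
    (hG : ∀ k, MvPowerSeries.constantCoeff (G k) = 1)
    (C : MvPowerSeries (Fin m) (MvPolynomial (Fin n) R))
    (hC : C = ∑ k, MvPowerSeries.C (MvPolynomial.X k) *
      MvPowerSeries.map (MvPolynomial.C : R →+* MvPolynomial (Fin n) R) (G k - 1))
    (E : MvPowerSeries (Fin m) (MvPolynomial (Fin n) R))
    (hE : ∀ i : Fin m →₀ ℕ,
      MvPowerSeries.coeff i E =
        ∑ l ∈ Finset.range ((∑ j, i j) + 1),
          ((l ! : ℚ)⁻¹) • MvPowerSeries.coeff i (C ^ l))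
    (B : (Fin m →₀ ℕ) → MvPolynomial (Fin n) R)
    (hB : ∀ i : Fin m →₀ ℕ,
      B i = (∏ j, ((i j)! : ℚ)) • MvPowerSeries.coeff i E)
    (H : MvPowerSeries (Fin m) R)
    (hH : ∀ i : Fin m →₀ ℕ,
      MvPowerSeries.coeff i H =
        ∑ᶠ j : Fin n →₀ ℕ,
          ((∏ k, ((j k)! : ℚ))⁻¹) •
            (a j * MvPowerSeries.coeff i (∏ k, (G k - 1) ^ j k)))
    (i : Fin m →₀ ℕ) :
    ∑ j ∈ (B i).support, (B i).coeff j * a j =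
      (∏ j, ((i j)! : ℚ)) • MvPowerSeries.coeff i H :=
  stmt13_general a G hG C hC E hE B hB H hH i
end

section
/- Let N be a nonnegative-integer-valued random variable whose probability generating structure is Poisson with random parameter Y (a randomized Poisson), and let X₁, X₂, ... be i.i.d. random vectors in ℝⁿ independent of N, with joint moment EGF G(t) = E[exp(X·tᵀ)]. Then the moment EGF of the random sum S_N = X₁+...+X_N equals f_Y(G(t) − 1), where f_Y(s) = E[e^{Ys}] is the moment EGF of Y. Consequently, the i-th joint moment of S_N equals Σ_{λ ⊨⊨ i} (i!/(m(λ)! λ!)) E[Y^{ℓ(λ)}] g_λ, summing over partitions λ of the multi-index i, with g_λ the product of joint moments of X₁ indexed by the parts of λ. -/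
/-!
Conditionally on `N = m`, the multinomial theorem and the factorisation of the mixed moments
turn `E[S_N^i; N = m]` into `P(N = m) · i! · [t^i] G^m`. Expanding `G^m = (1 + (G - 1))^m`
binomially, only `q ≤ |i|` contribute because `G - 1` has no constant term, and summing over
`m` leaves the factorial moments `∑ₘ C(m, q) P(N = m) = E[Y^q] / q!` of the mixed Poisson law:
for a fixed Poisson parameter they come from the exponential series, and dominated convergence
integrates them against `Y`. The partition formula is the multinomial expansion of
`[t^i] (G - 1)^q` over multisets of nonzero multi-indices.
-/

open Nat MeasureTheory

section PoissonFactorialMoments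

open Real Finset

theorem hasSum_choose_mul_poisson (q : ℕ) (y : ℝ) :
    HasSum (fun m : ℕ => (m.choose q : ℝ) * (exp (-y) * y ^ m / m !)) (y ^ q / q !) := by
  have hshift (r : ℕ) : ((r + q).choose q : ℝ) * (exp (-y) * y ^ (r + q) / (r + q)!) =
      exp (-y) * y ^ q / q ! * (y ^ r / r !) := by
    rw [Nat.cast_choose ℝ (Nat.le_add_left q r), Nat.add_sub_cancel, pow_add]
    field_simp
  have hlow : ∑ m ∈ range q, (m.choose q : ℝ) * (exp (-y) * y ^ m / m !) = 0 :=
    sum_eq_zero fun m hm => by simp [Nat.choose_eq_zero_of_lt (mem_range.1 hm)]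
  have hexp : HasSum (fun r : ℕ => y ^ r / r !) (exp y) := by
    rw [Real.exp_eq_exp_ℝ]
    exact NormedSpace.expSeries_div_hasSum_exp y
  have hval : exp (-y) * y ^ q / q ! * exp y = y ^ q / q ! := by
    rw [mul_comm, ← mul_div_assoc, ← mul_assoc, ← exp_add, add_neg_cancel, exp_zero, one_mul]
  rw [← hasSum_nat_add_iff' q, hlow, sub_zero, ← hval]
  simpa only [hshift] using hexp.mul_left (exp (-y) * y ^ q / q !)

theorem hasSum_choose_mul_integral_poisson {Ω : Type*} [MeasurableSpace Ω] (μ : Measure Ω)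
    {Y : Ω → ℝ} (hY : Measurable Y) (hY0 : ∀ ω, 0 ≤ Y ω) {q : ℕ}
    (hYq : Integrable (fun ω => Y ω ^ q) μ) :
    HasSum (fun m : ℕ => (m.choose q : ℝ) * ∫ ω, exp (-Y ω) * Y ω ^ m / m ! ∂μ)
      ((∫ ω, Y ω ^ q ∂μ) / q !) := by
  have hpt (ω : Ω) := hasSum_choose_mul_poisson q (Y ω)
  simp_rw [← integral_const_mul, ← integral_div]
  refine hasSum_integral_of_dominated_convergence
    (fun m ω => (m.choose q : ℝ) * (exp (-Y ω) * Y ω ^ m / m !))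
    (fun m => by fun_prop) (fun m => ae_of_all _ fun ω => ?_)
    (ae_of_all _ fun ω => (hpt ω).summable) ?_ (ae_of_all _ hpt)
  · have := hY0 ω
    exact (Real.norm_of_nonneg (by positivity)).le
  · simpa only [fun ω => (hpt ω).tsum_eq] using hYq.div_const _

end PoissonFactorialMoments

section VectorMultinomial

open Finset

variable {ι σ : Type*} [DecidableEq ι] [Fintype σ] [DecidableEq σ]

theorem sum_piFinset_piAntidiag_eq_sum_finsuppAntidiag {M : Type*} [AddCommMonoid M]
    (s : Finset ι) (i : σ →₀ ℕ) (F : (σ → ι → ℕ) → M) :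
    ∑ K ∈ Fintype.piFinset fun k => piAntidiag s (i k), F K =
      ∑ d ∈ finsuppAntidiag s i, F fun k l => d l k := by
  symm
  refine sum_nbij (fun d k l => d l k) (fun d hd => ?_) (fun d _ d' _ h => ?_)
    (fun K hK => ?_) fun _ _ => rfl
  · rw [mem_finsuppAntidiag] at hd
    simp only [Fintype.mem_piFinset, mem_piAntidiag]
    exact fun k => ⟨by rw [← hd.1, Finset.sum_apply'],
      fun l hl => hd.2 (Finsupp.mem_support_iff.2 fun h => hl (by simp [h]))⟩
  · ext l k
    exact congrFun (congrFun h k) l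
  · simp only [mem_coe, Fintype.mem_piFinset, mem_piAntidiag] at hK
    refine ⟨Finsupp.onFinset s (fun l => Finsupp.equivFunOnFinite.symm fun k => K k l)
      fun l hl => ?_, ?_, rfl⟩
    · obtain ⟨k, hk⟩ := Finsupp.ne_iff.1 hl
      exact (hK k).2 l hk
    · refine mem_finsuppAntidiag.2 ⟨?_, Finsupp.support_onFinset_subset⟩
      ext k
      rw [Finset.sum_apply']
      exact (hK k).1

theorem prod_sum_pow_eq_sum_finsuppAntidiag {R : Type*} [CommSemiring R] (s : Finset ι)
    (x : ι → σ → R) (i : σ →₀ ℕ) :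
    ∏ k, (∑ l ∈ s, x l k) ^ i k = ∑ d ∈ finsuppAntidiag s i,
      (∏ k, (multinomial s fun l => d l k : R)) * ∏ l ∈ s, ∏ k, x l k ^ d l k := by
  simp_rw [sum_pow_eq_sum_piAntidiag, prod_univ_sum,
    sum_piFinset_piAntidiag_eq_sum_finsuppAntidiag]
  exact sum_congr rfl fun d _ => by rw [prod_mul_distrib, prod_comm (s := univ)]

theorem prod_multinomial_mul_prod_prod_factorial {s : Finset ι} {i : σ →₀ ℕ}
    {d : ι →₀ σ →₀ ℕ} (hd : d ∈ finsuppAntidiag s i) :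
    (∏ k, multinomial s fun l => d l k) * ∏ l ∈ s, ∏ k, (d l k)! = ∏ k, (i k)! := by
  rw [prod_comm (s := s), ← prod_mul_distrib]
  refine prod_congr rfl fun k _ => ?_
  rw [mul_comm, multinomial_spec, ← (mem_finsuppAntidiag.1 hd).1, Finset.sum_apply']

end VectorMultinomial

section PowerSeriesCoefficients

open Finset MvPowerSeries

theorem factorial_mul_coeff_pow {σ : Type*} [Fintype σ] [DecidableEq σ]
    {G : MvPowerSeries σ ℝ} {g : (σ →₀ ℕ) → ℝ}
    (hG : ∀ j, coeff j G = (∏ k, ((j k)! : ℝ))⁻¹ * g j) (m : ℕ) (i : σ →₀ ℕ) :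
    (∏ k, ((i k)! : ℝ)) * coeff i (G ^ m) = ∑ d ∈ finsuppAntidiag (range m) i,
      (∏ k, (multinomial (range m) fun l => d l k : ℝ)) * ∏ l ∈ range m, g (d l) := by
  rw [coeff_pow, mul_sum]
  refine sum_congr rfl fun d hd => ?_
  have h := congrArg (Nat.cast : ℕ → ℝ) (prod_multinomial_mul_prod_prod_factorial hd)
  push_cast at h
  simp only [hG, prod_mul_distrib, prod_inv_distrib]
  rw [← h, mul_assoc, ← mul_assoc _ _⁻¹, mul_inv_cancel₀ (by positivity), one_mul]

theorem MvPowerSeries.coeff_one_add_pow {σ R : Type*} [CommSemiring R] {h : MvPowerSeries σ R}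
    (hh : constantCoeff h = 0) (m : ℕ) (i : σ →₀ ℕ) :
    coeff i ((1 + h) ^ m) = ∑ q ∈ range (i.degree + 1), (m.choose q : R) * coeff i (h ^ q) := by
  have hhigh : ∀ q ≥ i.degree + 1, (m.choose q : R) * coeff i (h ^ q) = 0 := fun q hq => by
    rw [coeff_eq_zero_of_constantCoeff_nilpotent (m := 1) (by simpa using hh) (by omega),
      mul_zero]
  have hchoose : ∀ q ≥ m + 1, (m.choose q : R) * coeff i (h ^ q) = 0 := fun q hq => by
    rw [Nat.choose_eq_zero_of_lt hq, Nat.cast_zero, zero_mul]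
  rw [add_comm, add_pow, map_sum,
    ← eventually_constant_sum hhigh (n := i.degree + 1 + (m + 1)) (by omega),
    eventually_constant_sum hchoose (by omega)]
  refine sum_congr rfl fun q _ => ?_
  rw [one_pow, mul_one, ← nsmul_eq_mul', map_nsmul, nsmul_eq_mul]

theorem MvPowerSeries.prod_map_monomial {σ R : Type*} [CommSemiring R]
    (c : (σ →₀ ℕ) → R) (P : Multiset (σ →₀ ℕ)) :
    (P.map fun p => monomial p (c p)).prod = monomial P.sum (P.map c).prod := by
  induction P using Multiset.induction_on with
  | empty => simp [monomial_zero_eq_C]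
  | cons p P ih => simp [ih, monomial_mul_monomial]

theorem MvPowerSeries.coeff_pow_eq_of_coeff_eq {σ R : Type*} [CommSemiring R]
    {f F : MvPowerSeries σ R} {i : σ →₀ ℕ} (h : ∀ p ≤ i, coeff p f = coeff p F) (q : ℕ) :
    coeff i (f ^ q) = coeff i (F ^ q) := by
  classical
  rw [coeff_pow, coeff_pow]
  refine sum_congr rfl fun d hd => prod_congr rfl fun l hl => h _ ?_
  rw [← (mem_finsuppAntidiag.1 hd).1]
  exact single_le_sum (f := fun l => d l) (fun _ _ => _root_.zero_le) hl

end PowerSeriesCoefficients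

theorem Multiset.prod_factorial_count_mul_countPerms {α : Type*} [DecidableEq α]
    (P : Multiset α) : (∏ x ∈ P.toFinset, (P.count x)!) * P.countPerms = P.card ! := by
  have h : P.countPerms = Nat.multinomial P.toFinset fun x => P.count x := by
    rw [Multiset.countPerms, Finsupp.multinomial_eq]
    rfl
  rw [h, Nat.multinomial_spec, Multiset.toFinset_sum_count_eq]

theorem Multiset.card_le_degree_sum {σ : Type*} {P : Multiset (σ →₀ ℕ)} (h0 : 0 ∉ P) :
    P.card ≤ P.sum.degree := by
  rw [map_multiset_sum]
  simpa using Multiset.card_nsmul_le_sum (s := P.map Finsupp.degree) (a := 1) fun x hx => by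
    obtain ⟨p, hp, rfl⟩ := Multiset.mem_map.1 hx
    exact Nat.one_le_iff_ne_zero.2 fun h => h0 ((Finsupp.degree_eq_zero_iff _).1 h ▸ hp)

section VectorPartitions

open Finset MvPowerSeries

variable {σ : Type*} [DecidableEq σ]

/-- The partitions `λ ⊨⊨ i` of length `ℓ(λ) = q`. -/
noncomputable def vectorPartitions (i : σ →₀ ℕ) (q : ℕ) : Finset (Multiset (σ →₀ ℕ)) :=
  ((((Iic i).erase 0).sym q).filter fun P => P.1.sum = i).image Sym.toMultiset

theorem mem_vectorPartitions {i : σ →₀ ℕ} {q : ℕ} {P : Multiset (σ →₀ ℕ)} :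
    P ∈ vectorPartitions i q ↔ 0 ∉ P ∧ P.sum = i ∧ P.card = q := by
  simp only [vectorPartitions, mem_image, mem_filter, mem_sym_iff, mem_erase, mem_Iic]
  constructor
  · rintro ⟨k, ⟨hk, hsum⟩, rfl⟩
    exact ⟨fun h0 => (hk 0 h0).1 rfl, hsum, k.2⟩
  · rintro ⟨h0, hsum, rfl⟩
    exact ⟨⟨P, rfl⟩, ⟨fun p hp => ⟨ne_of_mem_of_not_mem hp h0,
      hsum ▸ Multiset.le_sum_of_mem hp⟩, hsum⟩, rfl⟩

theorem finsum_mem_partitions_eq_sum {M : Type*} [AddCommMonoid M] (i : σ →₀ ℕ)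
    (F : Multiset (σ →₀ ℕ) → M) :
    ∑ᶠ (P : Multiset (σ →₀ ℕ)) (_ : 0 ∉ P ∧ P.sum = i), F P =
      ∑ q ∈ range (i.degree + 1), ∑ P ∈ vectorPartitions i q, F P := by
  have hdisj : (range (i.degree + 1) : Set ℕ).PairwiseDisjoint (vectorPartitions i) :=
    fun q _ q' _ hne => disjoint_left.2 fun P hP hP' =>
      hne ((mem_vectorPartitions.1 hP).2.2.symm.trans (mem_vectorPartitions.1 hP').2.2)
  have hset : {P : Multiset (σ →₀ ℕ) | 0 ∉ P ∧ P.sum = i} =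
      ↑((range (i.degree + 1)).biUnion (vectorPartitions i)) := by
    ext P
    simp only [Set.mem_ofPred_eq, coe_biUnion, mem_coe, mem_range, mem_vectorPartitions,
      Set.mem_iUnion, exists_prop]
    constructor
    · rintro ⟨h0, rfl⟩
      exact ⟨P.card, Nat.lt_succ_of_le (Multiset.card_le_degree_sum h0), h0, rfl, rfl⟩
    · rintro ⟨q, -, h0, hsum, -⟩
      exact ⟨h0, hsum⟩
  rw [← sum_biUnion hdisj, ← finsum_mem_coe_finset, ← hset]
  rfl

theorem MvPowerSeries.coeff_pow_eq_sum_vectorPartitions {R : Type*} [CommSemiring R]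
    {f : MvPowerSeries σ R} (hf : constantCoeff f = 0) (i : σ →₀ ℕ) (q : ℕ) :
    coeff i (f ^ q) =
      ∑ P ∈ vectorPartitions i q, (P.countPerms : R) * (P.map fun p => coeff p f).prod := by
  -- only the coefficients at nonzero `p ≤ i` enter, so `f` may be replaced by a polynomial
  set A := (Iic i).erase 0
  have htrunc : ∀ p ≤ i, coeff p f = coeff p (∑ p ∈ A, monomial p (coeff p f)) := by
    intro p hp
    simp only [map_sum, coeff_monomial, sum_ite_eq, A, mem_erase, mem_Iic, hp, and_true]
    split_ifs with h0
    · rfl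
    · rw [not_not.1 h0, coeff_zero_eq_constantCoeff_apply, hf]
  rw [coeff_pow_eq_of_coeff_eq htrunc, sum_pow, map_sum, vectorPartitions,
    sum_image fun _ _ _ _ h => Sym.coe_injective h, sum_filter]
  refine sum_congr rfl fun k _ => ?_
  rw [prod_map_monomial, ← map_natCast (C (σ := σ) (R := R)), coeff_C_mul, coeff_monomial]
  simp only [eq_comm (a := i), mul_ite, mul_zero]
  congr

theorem sum_range_mul_coeff_pow_sub_one_eq_finsum [Fintype σ]
    {G : MvPowerSeries σ ℝ} {g : (σ →₀ ℕ) → ℝ}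
    (hG : ∀ j, coeff j G = (∏ k, ((j k)! : ℝ))⁻¹ * g j)
    (hG0 : constantCoeff G = 1) (ν : ℕ → ℝ) (i : σ →₀ ℕ) :
    ∑ q ∈ range (i.degree + 1),
        ν q / q ! * ((∏ k, ((i k)! : ℝ)) * coeff i ((G - 1) ^ q)) =
      ∑ᶠ (P : Multiset (σ →₀ ℕ)) (_ : 0 ∉ P ∧ P.sum = i),
        ((∏ k, ((i k)! : ℝ)) / ((∏ x ∈ P.toFinset, ((P.count x)! : ℝ)) *
          (P.map fun p => ∏ k, ((p k)! : ℝ)).prod)) * ν P.card * (P.map g).prod := by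
  have hG1 : constantCoeff (G - 1) = 0 := by rw [map_sub, hG0, map_one, sub_self]
  rw [finsum_mem_partitions_eq_sum]
  refine sum_congr rfl fun q _ => ?_
  rw [coeff_pow_eq_sum_vectorPartitions hG1, mul_sum, mul_sum]
  refine sum_congr rfl fun P hP => ?_
  obtain ⟨h0, -, rfl⟩ := mem_vectorPartitions.1 hP
  have hcoeff : (P.map fun p => coeff p (G - 1)).prod =
      ((P.map fun p => ∏ k, ((p k)! : ℝ)).prod)⁻¹ * (P.map g).prod := by
    rw [← Multiset.prod_map_inv, ← Multiset.prod_map_mul]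
    refine congrArg _ (Multiset.map_congr rfl fun p hp => ?_)
    rw [map_sub, coeff_one, if_neg (ne_of_mem_of_not_mem hp h0), sub_zero, hG]
  have hperm := congrArg (Nat.cast : ℕ → ℝ) P.prod_factorial_count_mul_countPerms
  push_cast at hperm
  have hcard : (P.card ! : ℝ) ≠ 0 := by positivity
  have hcount : (P.countPerms : ℝ) ≠ 0 := right_ne_zero_of_mul (hperm ▸ hcard)
  rw [hcoeff, ← hperm]
  field_simp

end VectorPartitions

section CompoundSum

open Finset MvPowerSeries

variable {Ω σ : Type*} [MeasurableSpace Ω] [Fintype σ] {μ : Measure Ω}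
  {N : Ω → ℕ} {X : ℕ → Ω → σ → ℝ} {g : (σ →₀ ℕ) → ℝ} {G : MvPowerSeries σ ℝ}

theorem setIntegral_prod_sum_pow_eq (hN : Measurable N)
    (hXint : ∀ (m : ℕ) (j : ℕ → σ →₀ ℕ),
      Integrable (fun ω => ∏ l ∈ range m, ∏ k, X l ω k ^ j l k) μ)
    (hfac : ∀ (m : ℕ) (j : ℕ → σ →₀ ℕ),
      ∫ ω in {ω | N ω = m}, ∏ l ∈ range m, ∏ k, X l ω k ^ j l k ∂μ =
        (μ {ω | N ω = m}).toReal * ∏ l ∈ range m, g (j l))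
    (hG : ∀ j, coeff j G = (∏ k, ((j k)! : ℝ))⁻¹ * g j) (m : ℕ) (i : σ →₀ ℕ) :
    ∫ ω in {ω | N ω = m}, ∏ k, (∑ l ∈ range (N ω), X l ω k) ^ i k ∂μ =
      (μ {ω | N ω = m}).toReal * ((∏ k, ((i k)! : ℝ)) * coeff i (G ^ m)) := by
  classical
  have hexpand : Set.EqOn (fun ω => ∏ k, (∑ l ∈ range (N ω), X l ω k) ^ i k)
      (fun ω => ∑ d ∈ finsuppAntidiag (range m) i,
        (∏ k, (multinomial (range m) fun l => d l k : ℝ)) * ∏ l ∈ range m, ∏ k, X l ω k ^ d l k)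
      {ω | N ω = m} := fun ω (hω : N ω = m) => by
    simp only [hω, prod_sum_pow_eq_sum_finsuppAntidiag]
  have hfibre : MeasurableSet {ω | N ω = m} := hN (measurableSet_singleton m)
  rw [setIntegral_congr_fun hfibre hexpand,
    integral_finsetSum _ fun (d : ℕ →₀ σ →₀ ℕ) _ => ((hXint m d).const_mul _).restrict,
    factorial_mul_coeff_pow hG, mul_sum]
  refine sum_congr rfl fun d _ => ?_
  rw [integral_const_mul, hfac]
  ring

theorem integral_prod_sum_pow_eq {Y : Ω → ℝ} (hN : Measurable N) (hY : Measurable Y)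
    (hY0 : ∀ ω, 0 ≤ Y ω) (hYint : ∀ p : ℕ, Integrable (fun ω => Y ω ^ p) μ)
    (hmix : ∀ m : ℕ,
      (μ {ω | N ω = m}).toReal = ∫ ω, Real.exp (-Y ω) * Y ω ^ m / m ! ∂μ)
    (hXint : ∀ (m : ℕ) (j : ℕ → σ →₀ ℕ),
      Integrable (fun ω => ∏ l ∈ range m, ∏ k, X l ω k ^ j l k) μ)
    (hfac : ∀ (m : ℕ) (j : ℕ → σ →₀ ℕ),
      ∫ ω in {ω | N ω = m}, ∏ l ∈ range m, ∏ k, X l ω k ^ j l k ∂μ =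
        (μ {ω | N ω = m}).toReal * ∏ l ∈ range m, g (j l))
    (hG : ∀ j, coeff j G = (∏ k, ((j k)! : ℝ))⁻¹ * g j) (hG0 : constantCoeff G = 1)
    (i : σ →₀ ℕ)
    (hSint : Integrable (fun ω => ∏ k, (∑ l ∈ range (N ω), X l ω k) ^ i k) μ) :
    ∫ ω, ∏ k, (∑ l ∈ range (N ω), X l ω k) ^ i k ∂μ =
      ∑ q ∈ range (i.degree + 1),
        (∫ ω, Y ω ^ q ∂μ) / q ! * ((∏ k, ((i k)! : ℝ)) * coeff i ((G - 1) ^ q)) := by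
  have hcover : ⋃ m, {ω | N ω = m} = Set.univ := Set.iUnion_eq_univ_iff.2 fun ω => ⟨N ω, rfl⟩
  have hfibres := hasSum_integral_iUnion (s := fun m => {ω | N ω = m})
    (fun m => hN (measurableSet_singleton m)) (pairwise_disjoint_fiber N)
    (by rw [hcover]; exact hSint.integrableOn)
  rw [hcover, setIntegral_univ] at hfibres
  refine hfibres.unique ?_
  have hG1 : constantCoeff (G - 1) = 0 := by rw [map_sub, hG0, map_one, sub_self]
  have hbinom (m : ℕ) := add_sub_cancel (1 : MvPowerSeries σ ℝ) G ▸ coeff_one_add_pow hG1 m i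
  simp_rw [setIntegral_prod_sum_pow_eq hN hXint hfac hG, hbinom, mul_sum]
  refine hasSum_sum fun q _ => ?_
  have hq := (hasSum_choose_mul_integral_poisson μ hY hY0 (hYint q)).mul_right
    ((∏ k, ((i k)! : ℝ)) * coeff i ((G - 1) ^ q))
  simp only [← hmix] at hq
  exact hq.congr_fun fun m => by ring

end CompoundSum

theorem stmt16_general {n : ℕ} {Ω : Type*} [MeasurableSpace Ω] (ℙ : Measure Ω)
    [IsProbabilityMeasure ℙ]
    (Y : Ω → ℝ) (N : Ω → ℕ) (X : ℕ → Ω → Fin n → ℝ)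
    (hYmeas : Measurable Y) (hNmeas : Measurable N)
    (hYpos : ∀ ω, 0 ≤ Y ω)
    (hYint : ∀ p : ℕ, Integrable (fun ω => Y ω ^ p) ℙ)
    (g : (Fin n →₀ ℕ) → ℝ)
    (hg : ∀ i : Fin n →₀ ℕ, g i = ∫ ω, ∏ k, X 0 ω k ^ i k ∂ℙ)
    (hmix : ∀ m : ℕ,
      (ℙ {ω | N ω = m}).toReal = ∫ ω, Real.exp (-Y ω) * Y ω ^ m / m ! ∂ℙ)
    (hXint : ∀ (m : ℕ) (j : ℕ → Fin n →₀ ℕ),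
      Integrable (fun ω => ∏ l ∈ Finset.range m, ∏ k, X l ω k ^ j l k) ℙ)
    (hfac : ∀ (m : ℕ) (j : ℕ → Fin n →₀ ℕ),
      ∫ ω in {ω | N ω = m}, ∏ l ∈ Finset.range m, ∏ k, X l ω k ^ j l k ∂ℙ =
        (ℙ {ω | N ω = m}).toReal * ∏ l ∈ Finset.range m, g (j l))
    (hSint : ∀ i : Fin n →₀ ℕ,
      Integrable (fun ω => ∏ k, (∑ l ∈ Finset.range (N ω), X l ω k) ^ i k) ℙ)
    (G H : MvPowerSeries (Fin n) ℝ)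
    (hGdef : ∀ i : Fin n →₀ ℕ,
      MvPowerSeries.coeff i G = (∏ k, ((i k)! : ℝ))⁻¹ * g i)
    (hHdef : ∀ i : Fin n →₀ ℕ,
      MvPowerSeries.coeff i H =
        ∑ q ∈ Finset.range ((∑ k, i k) + 1),
          ((q ! : ℝ)⁻¹) * (∫ ω, Y ω ^ q ∂ℙ) * MvPowerSeries.coeff i ((G - 1) ^ q)) :
    (∀ i : Fin n →₀ ℕ,
      ∫ ω, ∏ k, (∑ l ∈ Finset.range (N ω), X l ω k) ^ i k ∂ℙ =
        (∏ k, ((i k)! : ℝ)) * MvPowerSeries.coeff i H) ∧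
    (∀ i : Fin n →₀ ℕ,
      ∫ ω, ∏ k, (∑ l ∈ Finset.range (N ω), X l ω k) ^ i k ∂ℙ =
        ∑ᶠ (P : Multiset (Fin n →₀ ℕ)) (_ : (0 : Fin n →₀ ℕ) ∉ P ∧ P.sum = i),
          ((∏ k, ((i k)! : ℝ)) /
              ((∏ x ∈ P.toFinset, ((P.count x)! : ℝ)) *
                (P.map fun p => ∏ k, ((p k)! : ℝ)).prod)) *
            (∫ ω, Y ω ^ P.card ∂ℙ) * (P.map g).prod) := by
  have hG0 : MvPowerSeries.constantCoeff G = 1 := by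
    rw [← MvPowerSeries.coeff_zero_eq_constantCoeff_apply, hGdef, hg]
    simp
  have hmoment (i : Fin n →₀ ℕ) :=
    integral_prod_sum_pow_eq hNmeas hYmeas hYpos hYint hmix hXint hfac hGdef hG0 i (hSint i)
  refine ⟨fun i => ?_, fun i => ?_⟩
  · rw [hmoment, hHdef, ← Finsupp.degree_eq_sum, Finset.mul_sum]
    exact Finset.sum_congr rfl fun q _ => by ring
  · rw [hmoment, sum_range_mul_coeff_pow_sub_one_eq_finsum hGdef hG0]

/-- **Randomized compound Poisson random vector.** Let `N` be conditionally Poisson with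
random parameter `Y` (so `P(N = m) = E[e^{-Y} Y^m / m!]`), and let `X₀, X₁, ...` be
i.i.d. random vectors in `ℝⁿ`, independent of `N`, with joint moments `g i`
(expressed by the factorization hypothesis `hfac`). Then the moment EGF of the random sum
`S_N = X₀ + ⋯ + X_{N-1}` equals `f_Y(G(t) - 1)` where `f_Y(s) = E[e^{Ys}]` and `G` is the
moment EGF of `X₀` (conclusion (1), with the composition computed coefficientwise), and
consequently the `i`-th joint moment of `S_N` equals
`∑_{λ ⊨⊨ i} (i! / (m(λ)! λ!)) E[Y^{ℓ(λ)}] g_λ`, summing over the partitions `λ` of the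
multi-index `i` (conclusion (2)). -/
theorem stmt16 {n : ℕ} {Ω : Type*} [MeasurableSpace Ω] (ℙ : Measure Ω)
    [IsProbabilityMeasure ℙ]
    (Y : Ω → ℝ) (N : Ω → ℕ) (X : ℕ → Ω → Fin n → ℝ)
    (hYmeas : Measurable Y) (hNmeas : Measurable N) (hXmeas : ∀ l, Measurable (X l))
    (hYpos : ∀ ω, 0 ≤ Y ω)
    (hYint : ∀ p : ℕ, Integrable (fun ω => Y ω ^ p) ℙ)
    (g : (Fin n →₀ ℕ) → ℝ)
    (hg : ∀ i : Fin n →₀ ℕ, g i = ∫ ω, ∏ k, X 0 ω k ^ i k ∂ℙ)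
    (hmix : ∀ m : ℕ,
      (ℙ {ω | N ω = m}).toReal = ∫ ω, Real.exp (-Y ω) * Y ω ^ m / m ! ∂ℙ)
    (hXint : ∀ (m : ℕ) (j : ℕ → Fin n →₀ ℕ),
      Integrable (fun ω => ∏ l ∈ Finset.range m, ∏ k, X l ω k ^ j l k) ℙ)
    (hfac : ∀ (m : ℕ) (j : ℕ → Fin n →₀ ℕ),
      ∫ ω in {ω | N ω = m}, ∏ l ∈ Finset.range m, ∏ k, X l ω k ^ j l k ∂ℙ =
        (ℙ {ω | N ω = m}).toReal * ∏ l ∈ Finset.range m, g (j l))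
    (hSint : ∀ i : Fin n →₀ ℕ,
      Integrable (fun ω => ∏ k, (∑ l ∈ Finset.range (N ω), X l ω k) ^ i k) ℙ)
    (G H : MvPowerSeries (Fin n) ℝ)
    (hGdef : ∀ i : Fin n →₀ ℕ,
      MvPowerSeries.coeff i G = (∏ k, ((i k)! : ℝ))⁻¹ * g i)
    (hHdef : ∀ i : Fin n →₀ ℕ,
      MvPowerSeries.coeff i H =
        ∑ q ∈ Finset.range ((∑ k, i k) + 1),
          ((q ! : ℝ)⁻¹) * (∫ ω, Y ω ^ q ∂ℙ) * MvPowerSeries.coeff i ((G - 1) ^ q)) :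
    (∀ i : Fin n →₀ ℕ,
      ∫ ω, ∏ k, (∑ l ∈ Finset.range (N ω), X l ω k) ^ i k ∂ℙ =
        (∏ k, ((i k)! : ℝ)) * MvPowerSeries.coeff i H) ∧
    (∀ i : Fin n →₀ ℕ,
      ∫ ω, ∏ k, (∑ l ∈ Finset.range (N ω), X l ω k) ^ i k ∂ℙ =
        ∑ᶠ (P : Multiset (Fin n →₀ ℕ)) (_ : (0 : Fin n →₀ ℕ) ∉ P ∧ P.sum = i),
          ((∏ k, ((i k)! : ℝ)) /
              ((∏ x ∈ P.toFinset, ((P.count x)! : ℝ)) *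
                (P.map fun p => ∏ k, ((p k)! : ℝ)).prod)) *
            (∫ ω, Y ω ^ P.card ∂ℙ) * (P.map g).prod) :=
  stmt16_general ℙ Y N X hYmeas hNmeas hYpos hYint g hg hmix hXint hfac hSint G H hGdef hHdef
end
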